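/- In the model of Theorems 1 and 2, at t = −t_MRCA (so S(t) = ∅ and all h_{t}^l, h_{t,ij}^l reduce appropriately), the fixed-effect genetic term vanishes: E_t[y] = (β^0 + Σ_l (u^l h_t^l/n^l) Σ_{s∈l} β^s)·𝟏, a constant vector, while Var_t(y) = Σ_l (σ_t^l)² A_t^l + σ_e² I with (σ_t^l)² = (u^l/n^l)Σ_{s∈l}(β^s)²: all genetic effects are random effects at the grand TMRCA. -/

import Mathlib

/-!
The phenotype `y = ∑ₛ βₛ Zₛ + β⁰ + ε` is a constant plus a sum of independent random vectors,
so its mean is the sum of the means and its covariance matrix the sum of the covariance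
matrices `βₛ² Cov(Zₛ)` and `Cov(ε)`; grouping the sites by locus gives both formulas.
-/

open MeasureTheory ProbabilityTheory

/-- The `n×n` covariance matrix of an `ℝⁿ`-valued random vector `Z`. -/
noncomputable def covMatrix {Ω : Type*} [MeasurableSpace Ω] (μ : Measure Ω) {n : ℕ}
    (Z : Ω → Fin n → ℝ) : Matrix (Fin n) (Fin n) ℝ :=
  Matrix.of fun i j =>
    (∫ ω, Z ω i * Z ω j ∂μ) - (∫ ω, Z ω i ∂μ) * (∫ ω, Z ω j ∂μ)

lemma Finset.sum_smul_comp_eq_sum_fiberwise {ι κ R M : Type*} [Fintype ι] [Fintype κ]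
    [DecidableEq κ] [Semiring R] [AddCommMonoid M] [Module R M]
    (g : ι → κ) (a : ι → R) (f : κ → M) :
    ∑ i, a i • f (g i) = ∑ k, (∑ i ∈ univ.filter (fun i => g i = k), a i) • f k := by
  rw [← Finset.sum_fiberwise univ g]
  refine Finset.sum_congr rfl fun k _ => ?_
  rw [Finset.sum_smul]
  exact Finset.sum_congr rfl fun i hi => by rw [(Finset.mem_filter.mp hi).2]

section

variable {Ω : Type*} [MeasurableSpace Ω] {μ : Measure Ω} {n : ℕ}

lemma integral_fun_sum_add_const [IsProbabilityMeasure μ] {ι : Type*} [Fintype ι]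
    {X : ι → Ω → ℝ} (hX : ∀ k, Integrable (X k) μ) (c : ℝ) :
    ∫ ω, ∑ k, X k ω + c ∂μ = ∑ k, ∫ ω, X k ω ∂μ + c := by
  rw [integral_add (integrable_finsetSum _ fun k _ => hX k) (integrable_const c),
    integral_finsetSum _ fun k _ => hX k, integral_const, probReal_univ, one_smul]

lemma covariance_fun_sum_fun_sum_of_indepFun {ι : Type*} [Fintype ι] [IsFiniteMeasure μ]
    {X Y : ι → Ω → ℝ} (hX : ∀ k, MemLp (X k) 2 μ) (hY : ∀ k, MemLp (Y k) 2 μ)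
    (hXY : ∀ k k', k ≠ k' → IndepFun (X k) (Y k') μ) :
    cov[fun ω => ∑ k, X k ω, fun ω => ∑ k, Y k ω; μ] = ∑ k, cov[X k, Y k; μ] := by
  classical
  rw [covariance_fun_sum_fun_sum hX hY]
  refine Finset.sum_congr rfl fun k _ => Fintype.sum_eq_single k fun k' hk' => ?_
  exact (hXY k k' hk'.symm).covariance_eq_zero (hX k) (hY k')

lemma covMatrix_apply_eq_covariance [IsProbabilityMeasure μ] {Z : Ω → Fin n → ℝ}
    (hZ : ∀ i, MemLp (fun ω => Z ω i) 2 μ) (i j : Fin n) :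
    covMatrix μ Z i j = cov[fun ω => Z ω i, fun ω => Z ω j; μ] :=
  (covariance_eq_sub (hZ i) (hZ j)).symm

lemma covMatrix_mul_const (Z : Ω → Fin n → ℝ) (c : ℝ) :
    covMatrix μ (fun ω i => Z ω i * c) = c ^ 2 • covMatrix μ Z := by
  ext i j
  simp only [covMatrix, Matrix.of_apply, Matrix.smul_apply, smul_eq_mul, integral_mul_const,
    show ∀ ω, Z ω i * c * (Z ω j * c) = Z ω i * Z ω j * c ^ 2 from fun ω => by ring]
  ring

lemma covMatrix_sum_add_const_of_iIndepFun [IsProbabilityMeasure μ] {ι : Type*} [Fintype ι]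
    {W : ι → Ω → Fin n → ℝ} (hW : iIndepFun W μ) (hL2 : ∀ k i, MemLp (fun ω => W k ω i) 2 μ)
    (c : Fin n → ℝ) :
    covMatrix μ (fun ω i => ∑ k, W k ω i + c i) = ∑ k, covMatrix μ (W k) := by
  have hsum : ∀ i, MemLp (fun ω => ∑ k, W k ω i) 2 μ := fun i =>
    memLp_finsetSum _ fun k _ => hL2 k i
  have hshift : ∀ i, MemLp (fun ω => ∑ k, W k ω i + c i) 2 μ := fun i =>
    (hsum i).add (memLp_const (c i))
  ext i j
  rw [covMatrix_apply_eq_covariance hshift,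
    covariance_add_const_left ((hsum i).integrable one_le_two),
    covariance_add_const_right ((hsum j).integrable one_le_two), Matrix.sum_apply,
    covariance_fun_sum_fun_sum_of_indepFun (fun k => hL2 k i) (fun k => hL2 k j)
      fun k k' hk => (hW.indepFun hk).comp (measurable_pi_apply i) (measurable_pi_apply j)]
  simp_rw [covMatrix_apply_eq_covariance (hL2 _)]

lemma ProbabilityTheory.iIndepFun.option_elim_mul_const {S : Type*} {ε : Ω → Fin n → ℝ}
    {Z : S → Ω → Fin n → ℝ} (h : iIndepFun (fun o : Option S => Option.elim o ε Z) μ)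
    (β : S → ℝ) :
    iIndepFun (fun o : Option S => Option.elim o ε fun s ω i => Z s ω i * β s) μ := by
  convert h.comp (fun o => Option.elim o id fun s v i => v i * β s) ?_ using 1
  · funext o
    cases o <;> rfl
  · rintro (_ | s)
    exacts [measurable_id, show Measurable fun (v : Fin n → ℝ) i => v i * β s by fun_prop]

end

theorem all_random_effects_at_tmrca_general {Ω : Type*} [MeasurableSpace Ω] (μ : Measure Ω)
    [IsProbabilityMeasure μ] {n nl : ℕ} {S : Type*} [Fintype S]
    (loc : S → Fin nl) (Z : S → Ω → Fin n → ℝ) (ε : Ω → Fin n → ℝ) (β : S → ℝ) (β0 : ℝ)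
    (u nsite h : Fin nl → ℝ) (hij : Fin nl → Fin n → Fin n → ℝ) (σe2 : ℝ)
    (hindep : iIndepFun
      (fun o : Option S => Option.elim o ε Z) μ)
    (hZL2 : ∀ s i, MemLp (fun ω => Z s ω i) 2 μ)
    (hεL2 : ∀ i, MemLp (fun ω => ε ω i) 2 μ)
    (hε0 : ∀ i, ∫ ω, ε ω i ∂μ = 0)
    (hεcov : covMatrix μ ε = σe2 • (1 : Matrix (Fin n) (Fin n) ℝ))
    (hmean : ∀ s i, ∫ ω, Z s ω i ∂μ = u (loc s) * h (loc s) / nsite (loc s))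
    (hcov : ∀ s i j,
      covMatrix μ (Z s) i j = u (loc s) / nsite (loc s) * (h (loc s) - hij (loc s) i j)) :
    (∀ i, ∫ ω, ((∑ s, Z s ω i * β s) + β0 + ε ω i) ∂μ
        = β0 + ∑ l, (u l * h l / nsite l) *
            ∑ s ∈ Finset.univ.filter (fun s => loc s = l), β s) ∧
      covMatrix μ (fun ω i => (∑ s, Z s ω i * β s) + β0 + ε ω i)
        = (∑ l, ((u l / nsite l) *
              ∑ s ∈ Finset.univ.filter (fun s => loc s = l), (β s) ^ 2) •
            Matrix.of (fun i j => h l - hij l i j))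
          + σe2 • (1 : Matrix (Fin n) (Fin n) ℝ) := by
  set W : Option S → Ω → Fin n → ℝ := fun o => Option.elim o ε fun s ω i => Z s ω i * β s
  have hWL2 : ∀ o i, MemLp (fun ω => W o ω i) 2 μ := by
    rintro (_ | s) i
    exacts [hεL2 i, (hZL2 s i).mul_const (β s)]
  have hy : ∀ ω i, (∑ s, Z s ω i * β s) + β0 + ε ω i = ∑ o, W o ω i + β0 := fun ω i => by
    simp only [W, Fintype.sum_option, Option.elim]
    ring
  have hcovZ : ∀ s, covMatrix μ (Z s)
      = (u (loc s) / nsite (loc s)) • Matrix.of fun i j => h (loc s) - hij (loc s) i j :=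
    fun s => Matrix.ext (hcov s)
  simp_rw [hy]
  constructor
  · intro i
    rw [integral_fun_sum_add_const (fun o => (hWL2 o i).integrable one_le_two),
      Fintype.sum_option, add_comm]
    simp only [W, Option.elim, hε0, integral_mul_const, hmean, zero_add]
    simp_rw [mul_comm (u _ * h _ / nsite _)]
    exact congrArg _ (Finset.sum_smul_comp_eq_sum_fiberwise loc β fun l => u l * h l / nsite l)
  · rw [covMatrix_sum_add_const_of_iIndepFun (hindep.option_elim_mul_const β) hWL2 (fun _ => β0),
      Fintype.sum_option, add_comm]
    simp only [Option.elim, hεcov, covMatrix_mul_const, hcovZ, mul_comm (u _ / nsite _),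
      mul_smul]
    rw [Finset.sum_smul_comp_eq_sum_fiberwise loc (β · ^ 2) fun l =>
      (u l / nsite l) • Matrix.of fun i j => h l - hij l i j]

/-- At the grand TMRCA (`S(t) = ∅`, no site yet polymorphic), all genetic effects are random
effects: `E_t[y] = (β⁰ + Σ_l (u^l h_t^l/n^l) Σ_{s∈l} β^s)·𝟏` is a constant vector, while
`Var_t(y) = Σ_l (σ_t^l)² A_t^l + σ_e² I` with `(σ_t^l)² = (u^l/n^l) Σ_{s∈l} (β^s)²`. -/
theorem all_random_effects_at_tmrca {Ω : Type*} [MeasurableSpace Ω] (μ : Measure Ω)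
    [IsProbabilityMeasure μ] {n nl : ℕ} {S : Type*} [Fintype S] [DecidableEq S]
    (loc : S → Fin nl) (Z : S → Ω → Fin n → ℝ) (ε : Ω → Fin n → ℝ) (β : S → ℝ) (β0 : ℝ)
    (u nsite h : Fin nl → ℝ) (hij : Fin nl → Fin n → Fin n → ℝ) (σe2 : ℝ)
    (hindep : iIndepFun
      (fun o : Option S => Option.elim o ε Z) μ)
    (hZL2 : ∀ s i, MemLp (fun ω => Z s ω i) 2 μ)
    (hεL2 : ∀ i, MemLp (fun ω => ε ω i) 2 μ)
    (hZmeas : ∀ s, Measurable (Z s)) (hεmeas : Measurable ε)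
    (hε0 : ∀ i, ∫ ω, ε ω i ∂μ = 0)
    (hεcov : covMatrix μ ε = σe2 • (1 : Matrix (Fin n) (Fin n) ℝ))
    (hmean : ∀ s i, ∫ ω, Z s ω i ∂μ = u (loc s) * h (loc s) / nsite (loc s))
    (hcov : ∀ s i j,
      covMatrix μ (Z s) i j = u (loc s) / nsite (loc s) * (h (loc s) - hij (loc s) i j)) :
    (∀ i, ∫ ω, ((∑ s, Z s ω i * β s) + β0 + ε ω i) ∂μ
        = β0 + ∑ l, (u l * h l / nsite l) *
            ∑ s ∈ Finset.univ.filter (fun s => loc s = l), β s) ∧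
      covMatrix μ (fun ω i => (∑ s, Z s ω i * β s) + β0 + ε ω i)
        = (∑ l, ((u l / nsite l) *
              ∑ s ∈ Finset.univ.filter (fun s => loc s = l), (β s) ^ 2) •
            Matrix.of (fun i j => h l - hij l i j))
          + σe2 • (1 : Matrix (Fin n) (Fin n) ℝ) :=
  all_random_effects_at_tmrca_general μ loc Z ε β β0 u nsite h hij σe2 hindep hZL2 hεL2 hε0 hεcov
    hmean hcov
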